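/- arXiv:2003.02121 — 2 statements merged into one kernel-verified Lean document; each statement's English description precedes it below -/
import Mathlib

section
/- Let n be odd with ⌈n/2⌉ divisible by 3, and let s, v ∈ S_C^(1)(n). If there exists a multiset D that is simultaneously the result of at most one composition error in C(s) and the result of at most one composition error in C(v), then σ_i(s) = σ_i(v) for all 1 ≤ i ≤ ⌈n/2⌉. (In other words, the sequence Σ^{⌈n/2⌉} of a codestring of S_C^(1)(n) can be recovered from its composition multiset corrupted by a single composition error.) -/
/-- The composition of a binary string: the pair (number of 0s, number of 1s).
Here `false` represents the bit 0 and `true` the bit 1. -/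
def comp (w : List Bool) : ℕ × ℕ := (w.count false, w.count true)

/-- The multiset of compositions of all contiguous substrings of `s` of length `l`. -/
def compLen (l : ℕ) (s : List Bool) : Multiset (ℕ × ℕ) :=
  ↑((List.range (s.length + 1 - l)).map fun i => comp ((s.drop i).take l))

/-- The composition multiset `C(s)`: compositions of all contiguous substrings of `s`. -/
def compMS (s : List Bool) : Multiset (ℕ × ℕ) :=
  ↑((List.range s.length).flatMap fun i =>
    (List.range (s.length - i)).map fun j => comp ((s.drop i).take (j + 1)))

/-- A single composition error: one element `(z,w)` of `M` is replaced by a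
pair `(z',w')` with the same length `z'+w' = z+w`. -/
def OneErr (M M' : Multiset (ℕ × ℕ)) : Prop :=
  ∃ z w z' w' : ℕ, (z, w) ∈ M ∧ z + w = z' + w' ∧
    M' = M - {(z, w)} + {(z', w')}

/-- `AtMostErr t M D`: `D` is obtained from `M` by at most `t` composition errors. -/
def AtMostErr : ℕ → Multiset (ℕ × ℕ) → Multiset (ℕ × ℕ) → Prop
  | 0, M, D => M = D
  | t + 1, M, D => M = D ∨ ∃ M', OneErr M M' ∧ AtMostErr t M' D

/-- The sub-multiset of elements (compositions) of length `l`. -/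
def lenPart (l : ℕ) (M : Multiset (ℕ × ℕ)) : Multiset (ℕ × ℕ) :=
  M.filter fun p => p.1 + p.2 = l

/-- `D` is the result of at most `t` *asymmetric* composition errors in `C(s)`,
for a string of length `n`: additionally, for each `1 ≤ i ≤ ⌊n/2⌋`, at most one
of the two sub-multisets of lengths `i` and `n+1-i` is altered. -/
def AsymErr (t n : ℕ) (s : List Bool) (D : Multiset (ℕ × ℕ)) : Prop :=
  AtMostErr t (compMS s) D ∧
  ∀ i, 1 ≤ i → i ≤ n / 2 →
    lenPart i D ≠ compLen i s → lenPart (n + 1 - i) D = compLen (n + 1 - i) s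

/-- A Catalan-Bertrand string: every nonempty prefix has strictly more 0s than 1s. -/
def IsCB (w : List Bool) : Prop :=
  ∀ j, 1 ≤ j → j ≤ w.length → (w.take j).count true < (w.take j).count false

/-- The reconstruction code `S_R(n)` for even `n`: `s_1 = 0`, `s_n = 1`, and the
subsequence of `s` indexed by the positions `i ∈ {1,…,n/2}` with `s_i ≠ s_{n+1-i}`
(in increasing order) is a Catalan-Bertrand string (indices here are 0-based). -/
def SReven (n : ℕ) : Set (List Bool) :=
  { s | s.length = n ∧ s.getD 0 false = false ∧ s.getD (n - 1) false = true ∧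
    IsCB (((List.range (n / 2)).filter fun i =>
        s.getD i false != s.getD (n - 1 - i) false).map fun i => s.getD i false) }

/-- The reconstruction code `S_R(n)`: for odd `n`, obtained from `S_R(n-1)` by
inserting an arbitrary middle bit. -/
def SR (n : ℕ) : Set (List Bool) :=
  if Even n then SReven n
  else { s | ∃ v ∈ SReven (n - 1), ∃ b : Bool,
      s = v.take ((n - 1) / 2) ++ [b] ++ v.drop ((n - 1) / 2) }

/-- The cumulative weight `w_l(s)`: total number of 1s over all length-`l`
contiguous substrings of `s`. -/
def cumW (l : ℕ) (s : List Bool) : ℕ :=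
  ∑ i ∈ Finset.range (s.length + 1 - l), ((s.drop i).take l).count true

/-- `σ_i(s) = s_i + s_{n+1-i}` for `1 ≤ i ≤ ⌊n/2⌋`, and `σ_{⌈n/2⌉}(s) = s_{⌈n/2⌉}`
for odd `n` (1-based indexing in the mathematical description). -/
def sigmaSeq (s : List Bool) (i : ℕ) : ℕ :=
  if 2 * i ≤ s.length then
    (if s.getD (i - 1) false then 1 else 0) +
      (if s.getD (s.length - i) false then 1 else 0)
  else (if s.getD (i - 1) false then 1 else 0)

/-- The single-error-correcting code `S_C^(1)(n)` (for odd `n` with `3 ∣ ⌈n/2⌉`):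
strings `s ∈ {0,1}ⁿ` such that `s` with the bits at positions 2 and `n−1` deleted
belongs to `S_R(n−2)`, `wt(s) ≡ 0 (mod 2)`, `Σ_{i=1}^{⌈n/2⌉} w_i(s) ≡ 0 (mod 3)`,
and `s_2 ≤ s_{n−1}`. -/
def SC1 (n : ℕ) : Set (List Bool) :=
  { s | s.length = n ∧
    (s.take 1 ++ (s.drop 2).take (n - 4) ++ s.drop (n - 1)) ∈ SR (n - 2) ∧
    s.count true % 2 = 0 ∧
    (∑ i ∈ Finset.Icc 1 ((n + 1) / 2), cumW i s) % 3 = 0 ∧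
    s.getD 1 false ≤ s.getD (n - 2) false }


/-! ### Auxiliary machinery -/

section Aux

/-- Coefficient: number of length-`l` windows of a length-`n` string covering position `q`. -/
def coefC (n l q : ℕ) : ℕ := if l ≤ n then min q (n - l) + 1 - (q + 1 - l) else 0

lemma coefC_of_le (n l q : ℕ) (h : l ≤ n) : coefC n l q = min q (n - l) + 1 - (q + 1 - l) :=
  if_pos h

lemma coefC_of_gt (n l q : ℕ) (h : n < l) : coefC n l q = 0 := if_neg (by omega)

lemma count_true_eq (t : List Bool) :
    t.count true = ∑ p ∈ Finset.range t.length, (if t.getD p false then 1 else 0) := by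
  induction t with
  | nil => simp
  | cons a t ih =>
    rw [List.length_cons, Finset.sum_range_succ']
    cases a <;> simp [List.count_cons, ih]

lemma getD_window (s : List Bool) (i l p : ℕ) (hp : p < l) :
    ((s.drop i).take l).getD p false = s.getD (i + p) false := by
  simp [List.getD_eq_getElem?_getD, List.getElem?_take, List.getElem?_drop, hp]

lemma window_count (s : List Bool) (i l : ℕ) (hl : i + l ≤ s.length) :
    ((s.drop i).take l).count true
      = ∑ q ∈ Finset.range s.length,
          (if i ≤ q ∧ q < i + l then (if s.getD q false then 1 else 0) else 0) := by
  rw [count_true_eq]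
  have hlen : ((s.drop i).take l).length = l := by
    simp [List.length_take, List.length_drop]; omega
  rw [hlen]
  symm
  rw [← Finset.sum_filter]
  have hset : (Finset.range s.length).filter (fun q => i ≤ q ∧ q < i + l)
      = Finset.Ico i (i + l) := by
    ext q; simp [Finset.mem_Ico]; omega
  rw [hset, Finset.sum_Ico_eq_sum_range]
  simp only [Nat.add_sub_cancel_left]
  exact (Finset.sum_congr rfl fun p hp => by
    rw [getD_window s i l p (Finset.mem_range.mp hp)]).symm

lemma cumW_eq_sum (s : List Bool) (l : ℕ) :
    cumW l s = ∑ q ∈ Finset.range s.length,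
      coefC s.length l q * (if s.getD q false then 1 else 0) := by
  by_cases hl : l ≤ s.length
  · unfold cumW
    rw [Finset.sum_congr rfl (fun i hi => window_count s i l (by
      have := Finset.mem_range.mp hi; omega))]
    rw [Finset.sum_comm]
    refine Finset.sum_congr rfl fun q hq => ?_
    have hq' := Finset.mem_range.mp hq
    rw [← Finset.sum_filter]
    have hset : (Finset.range (s.length + 1 - l)).filter (fun i => i ≤ q ∧ q < i + l)
        = Finset.Icc (q + 1 - l) (min q (s.length - l)) := by
      ext i; simp [Finset.mem_Icc]; omega
    rw [hset, Finset.sum_const, Nat.card_Icc, smul_eq_mul]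
    have : coefC s.length l q = min q (s.length - l) + 1 - (q + 1 - l) := by
      simp [coefC, hl]
    rw [this]
  · have h1 : s.length + 1 - l = 0 := by omega
    have h2 : ∀ q, coefC s.length l q = 0 := fun q => by simp [coefC]; omega
    simp [cumW, h1, h2]

lemma cumW_gt (s : List Bool) (l : ℕ) (h : s.length < l) : cumW l s = 0 := by
  have : s.length + 1 - l = 0 := by omega
  simp [cumW, this]

lemma cumW_symm (s : List Bool) (n l : ℕ) (hs : s.length = n)
    (h1 : 1 ≤ l) (h2 : l ≤ n) : cumW l s = cumW (n + 1 - l) s := by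
  subst hs
  rw [cumW_eq_sum, cumW_eq_sum]
  refine Finset.sum_congr rfl fun q hq => ?_
  have hq' := Finset.mem_range.mp hq
  have : coefC s.length l q = coefC s.length (s.length + 1 - l) q := by
    unfold coefC; split_ifs <;> omega
  rw [this]

lemma sigma_le (s : List Bool) (j : ℕ) : sigmaSeq s j ≤ 2 := by
  unfold sigmaSeq; split_ifs <;> omega

set_option maxHeartbeats 2000000 in
lemma keyA (n j q : ℕ) (hj1 : 1 ≤ j) (hA : 2 * j ≤ n) (hq : q < n) :
    coefC n (n - j) q + coefC n (n + 2 - j) q +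
      ((if q = j - 1 then 1 else 0) + (if q = n - j then 1 else 0))
      = 2 * coefC n (n + 1 - j) q := by
  rw [coefC_of_le n (n - j) q (by omega), coefC_of_le n (n + 1 - j) q (by omega)]
  have h23 : coefC n (n + 2 - j) q
      = if 2 ≤ j then min q (n - (n + 2 - j)) + 1 - (q + 1 - (n + 2 - j)) else 0 := by
    by_cases hj : 2 ≤ j
    · rw [if_pos hj, coefC_of_le n (n + 2 - j) q (by omega)]
    · rw [if_neg hj, coefC_of_gt n (n + 2 - j) q (by omega)]
  rw [h23]
  by_cases hB : q = j - 1
  · rw [if_pos hB]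
    by_cases hC : q = n - j
    · rw [if_pos hC]; by_cases hj : 2 ≤ j
      · rw [if_pos hj]; omega
      · rw [if_neg hj]; omega
    · rw [if_neg hC]; by_cases hj : 2 ≤ j
      · rw [if_pos hj]; omega
      · rw [if_neg hj]; omega
  · rw [if_neg hB]
    by_cases hC : q = n - j
    · rw [if_pos hC]; by_cases hj : 2 ≤ j
      · rw [if_pos hj]; omega
      · rw [if_neg hj]; omega
    · rw [if_neg hC]; by_cases hj : 2 ≤ j
      · rw [if_pos hj]; omega
      · rw [if_neg hj]; omega

set_option maxHeartbeats 2000000 in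
lemma keyM (n j q : ℕ) (hn3 : 3 ≤ n) (hj1 : 1 ≤ j) (hM : 2 * j = n + 1) (hq : q < n) :
    coefC n (n - j) q + coefC n (n + 2 - j) q + 2 * (if q = j - 1 then 1 else 0)
      = 2 * coefC n (n + 1 - j) q := by
  rw [coefC_of_le n (n - j) q (by omega), coefC_of_le n (n + 1 - j) q (by omega),
    coefC_of_le n (n + 2 - j) q (by omega)]
  by_cases hB : q = j - 1
  · rw [if_pos hB]; omega
  · rw [if_neg hB]; omega

lemma sigma_identity (s : List Bool) (n j : ℕ) (hs : s.length = n) (hn : n % 2 = 1)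
    (hn3 : 3 ≤ n) (hj1 : 1 ≤ j) (hj2 : j ≤ (n + 1) / 2) :
    cumW (n - j) s + cumW (n + 2 - j) s
        + (if 2 * j ≤ n then 1 else 2) * sigmaSeq s j
      = 2 * cumW (n + 1 - j) s := by
  have hσgen : ∀ a : ℕ, a < n →
      (if s.getD a false then 1 else 0)
        = ∑ q ∈ Finset.range n,
            (if q = a then 1 else 0) * (if s.getD q false then 1 else 0) := by
    intro a ha
    simp only [ite_mul, one_mul, zero_mul]
    rw [Finset.sum_ite_eq' (Finset.range n) a]
    simp [Finset.mem_range.mpr ha]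
  by_cases hA : 2 * j ≤ n
  · have hσ : sigmaSeq s j
        = ∑ q ∈ Finset.range n,
            ((if q = j - 1 then 1 else 0) + (if q = n - j then 1 else 0))
            * (if s.getD q false then 1 else 0) := by
      have h2j : 2 * j ≤ s.length := by omega
      rw [sigmaSeq, if_pos h2j, hs]
      rw [hσgen (j - 1) (by omega), hσgen (n - j) (by omega), ← Finset.sum_add_distrib]
      exact Finset.sum_congr rfl fun q _ => by ring
    rw [if_pos hA, one_mul, hσ, cumW_eq_sum, cumW_eq_sum, cumW_eq_sum, hs,
      ← Finset.sum_add_distrib, ← Finset.sum_add_distrib, Finset.mul_sum]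
    refine Finset.sum_congr rfl fun q hq => ?_
    have hq' := Finset.mem_range.mp hq
    rw [← add_mul, ← add_mul, keyA n j q hj1 hA hq', mul_assoc]
  · have hM : 2 * j = n + 1 := by omega
    have hσ : 2 * sigmaSeq s j
        = ∑ q ∈ Finset.range n,
            (2 * (if q = j - 1 then 1 else 0)) * (if s.getD q false then 1 else 0) := by
      have h2j : ¬ (2 * j ≤ s.length) := by omega
      rw [sigmaSeq, if_neg h2j]
      rw [hσgen (j - 1) (by omega), Finset.mul_sum]
      exact Finset.sum_congr rfl fun q _ => by ring
    rw [if_neg hA, hσ, cumW_eq_sum, cumW_eq_sum, cumW_eq_sum, hs,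
      ← Finset.sum_add_distrib, ← Finset.sum_add_distrib, Finset.mul_sum]
    refine Finset.sum_congr rfl fun q hq => ?_
    have hq' := Finset.mem_range.mp hq
    rw [← add_mul, ← add_mul, keyM n j q hn3 hj1 hM hq', mul_assoc]

/-- Weight of the length-`l` part of a composition multiset. -/
def WM (M : Multiset (ℕ × ℕ)) (l : ℕ) : ℕ :=
  (M.map fun p => if p.1 + p.2 = l then p.2 else 0).sum

lemma count_false_add_count_true (w : List Bool) : w.count false + w.count true = w.length := by
  induction w with
  | nil => simp
  | cons a t ih => cases a <;> simp [List.count_cons] <;> omega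

lemma sum_map_flatMap {α β : Type} (L : List α) (f : α → List β) (g : β → ℕ) :
    ((L.flatMap f).map g).sum = (L.map (fun a => ((f a).map g).sum)).sum := by
  induction L with
  | nil => simp
  | cons a t ih => simp [List.flatMap_cons, ih]

lemma WM_add (A B : Multiset (ℕ × ℕ)) (l : ℕ) : WM (A + B) l = WM A l + WM B l := by
  simp [WM]

lemma WM_err (M D : Multiset (ℕ × ℕ)) (h : AtMostErr 1 M D) :
    ∃ a, ∀ l, l ≠ a → WM D l = WM M l := by
  rcases h with h | ⟨M', ⟨z, w, z', w', hmem, hlen, hM'⟩, hM'D⟩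
  · exact ⟨0, fun l _ => by rw [h]⟩
  · have hM'D : M' = D := hM'D
    refine ⟨z + w, fun l hl => ?_⟩
    have hsub : M - {(z, w)} + {(z, w)} = M :=
      tsub_add_cancel_of_le (Multiset.singleton_le.mpr hmem)
    have h1 : WM M l = WM (M - {(z, w)}) l + WM {(z, w)} l := by
      rw [← WM_add, hsub]
    have h2 : WM {(z, w)} l = 0 := by
      simp only [WM, Multiset.map_singleton, Multiset.sum_singleton]
      exact if_neg (fun h => hl h.symm)
    have h3 : WM {(z', w')} l = 0 := by
      simp only [WM, Multiset.map_singleton, Multiset.sum_singleton]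
      exact if_neg (by omega)
    rw [← hM'D, hM', WM_add, h3, h1, h2]

lemma WM_compMS (s : List Bool) (l : ℕ) : WM (compMS s) l = cumW l s := by
  set n := s.length with hn
  have hval : ∀ (k : ℕ) (g : ℕ → ℕ), ((List.range k).map g).sum = ∑ i ∈ Finset.range k, g i :=
    fun _ _ => rfl
  have h1 : WM (compMS s) l = ∑ i ∈ Finset.range n, ∑ j ∈ Finset.range (n - i),
      (if ((s.drop i).take (j + 1)).length = l
        then ((s.drop i).take (j + 1)).count true else 0) := by
    show (((List.range n).flatMap fun i =>
        (List.range (n - i)).map fun j => comp ((s.drop i).take (j + 1))).map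
          fun p => if p.1 + p.2 = l then p.2 else 0).sum = _
    rw [sum_map_flatMap, hval]
    refine Finset.sum_congr rfl fun i _ => ?_
    rw [List.map_map, hval]
    refine Finset.sum_congr rfl fun j _ => ?_
    show (if (comp _).1 + (comp _).2 = l then _ else 0) = _
    rw [show ∀ w : List Bool, (comp w).1 + (comp w).2 = w.length from
      fun w => count_false_add_count_true w]
    rfl
  rw [h1]
  by_cases hl : 1 ≤ l
  · have h2 : ∀ i ∈ Finset.range n, (∑ j ∈ Finset.range (n - i),
        (if ((s.drop i).take (j + 1)).length = l
          then ((s.drop i).take (j + 1)).count true else 0))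
        = if l - 1 < n - i then ((s.drop i).take l).count true else 0 := by
      intro i hi
      have hi' := Finset.mem_range.mp hi
      have hlen : ∀ j ∈ Finset.range (n - i),
          ((s.drop i).take (j + 1)).length = min (j + 1) (n - i) := by
        intro j _
        simp [List.length_take, List.length_drop, ← hn]
      have hcond : ∀ j ∈ Finset.range (n - i),
          (if ((s.drop i).take (j + 1)).length = l
            then ((s.drop i).take (j + 1)).count true else 0)
          = (if j = l - 1 then ((s.drop i).take (j + 1)).count true else 0) := by
        intro j hj
        rw [hlen j hj]
        have := Finset.mem_range.mp hj
        exact if_congr (by omega) rfl rfl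
      rw [Finset.sum_congr rfl hcond]
      rw [Finset.sum_ite_eq' (Finset.range (n - i)) (l - 1)]
      simp only [Finset.mem_range]
      by_cases hcase : l - 1 < n - i
      · rw [if_pos hcase, if_pos hcase]
        have hll : l - 1 + 1 = l := by omega
        rw [hll]
      · rw [if_neg hcase, if_neg hcase]
    rw [Finset.sum_congr rfl h2, ← Finset.sum_filter]
    have hset : (Finset.range n).filter (fun i => l - 1 < n - i) = Finset.range (n + 1 - l) := by
      ext i; simp; omega
    rw [hset, cumW, ← hn]
  · have hl0 : l = 0 := by omega
    subst hl0
    have : ∀ i ∈ Finset.range n, (∑ j ∈ Finset.range (n - i),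
        (if ((s.drop i).take (j + 1)).length = 0
          then ((s.drop i).take (j + 1)).count true else 0)) = 0 := by
      intro i hi
      refine Finset.sum_eq_zero fun j hj => if_neg ?_
      have := Finset.mem_range.mp hi
      have := Finset.mem_range.mp hj
      simp [List.length_take, List.length_drop, ← hn]
      omega
    rw [Finset.sum_congr rfl this, Finset.sum_const, smul_eq_mul, mul_zero, cumW]
    simp

lemma key_contra (s v : List Bool) (n c : ℕ) (hslen : s.length = n) (hvlen : v.length = n)
    (hn : n % 2 = 1) (hn5 : 5 ≤ n) (hc1 : 1 ≤ c) (hc2 : c ≤ (n + 1) / 2)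
    (hz : ∀ i, 1 ≤ i → i ≤ (n + 1) / 2 → i ≠ c → cumW i s = cumW i v)
    (hs3 : (∑ i ∈ Finset.Icc 1 ((n + 1) / 2), cumW i s) % 3 = 0)
    (hv3 : (∑ i ∈ Finset.Icc 1 ((n + 1) / 2), cumW i v) % 3 = 0) :
    cumW c s = cumW c v := by
  have hmod : (3 : ℤ) ∣ ((cumW c s : ℤ) - cumW c v) := by
    have e : ∑ i ∈ Finset.Icc 1 ((n + 1) / 2), ((cumW i s : ℤ) - cumW i v)
        = (cumW c s : ℤ) - cumW c v := by
      rw [Finset.sum_eq_single_of_mem c (Finset.mem_Icc.mpr ⟨hc1, hc2⟩)]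
      intro i hi hne
      have hi' := Finset.mem_Icc.mp hi
      rw [hz i hi'.1 hi'.2 hne]
      ring
    rw [← e, Finset.sum_sub_distrib, ← Nat.cast_sum, ← Nat.cast_sum]
    omega
  have hnc : cumW (n - c) s = cumW (n - c) v := by
    by_cases hcm : 2 * c = n + 1
    · exact hz (n - c) (by omega) (by omega) (by omega)
    · have h1 := cumW_symm s n (n - c) hslen (by omega) (by omega)
      have h2 := cumW_symm v n (n - c) hvlen (by omega) (by omega)
      have e : n + 1 - (n - c) = c + 1 := by omega
      rw [e] at h1 h2
      rw [h1, h2]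
      exact hz (c + 1) (by omega) (by omega) (by omega)
  have hn2c : cumW (n + 2 - c) s = cumW (n + 2 - c) v := by
    by_cases hc2' : 2 ≤ c
    · have h1 := cumW_symm s n (n + 2 - c) hslen (by omega) (by omega)
      have h2 := cumW_symm v n (n + 2 - c) hvlen (by omega) (by omega)
      have e : n + 1 - (n + 2 - c) = c - 1 := by omega
      rw [e] at h1 h2
      rw [h1, h2]
      exact hz (c - 1) (by omega) (by omega) (by omega)
    · rw [cumW_gt s (n + 2 - c) (by omega), cumW_gt v (n + 2 - c) (by omega)]
  have hsy_s := cumW_symm s n c hslen hc1 (by omega)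
  have hsy_v := cumW_symm v n c hvlen hc1 (by omega)
  have is_ := sigma_identity s n c hslen hn (by omega) hc1 hc2
  have iv_ := sigma_identity v n c hvlen hn (by omega) hc1 hc2
  have bs := sigma_le s c
  have bv := sigma_le v c
  by_cases hk : 2 * c ≤ n
  · rw [if_pos hk] at is_ iv_; omega
  · rw [if_neg hk] at is_ iv_; omega

end Aux

/-- Let `n` be odd with `3 ∣ ⌈n/2⌉` and `s, v ∈ S_C^(1)(n)`. If some
multiset `D` is simultaneously the result of at most one composition error in `C(s)`
and in `C(v)`, then `σ_i(s) = σ_i(v)` for all `1 ≤ i ≤ ⌈n/2⌉`. -/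
theorem SC1_sigma_recoverable (n : ℕ) (hodd : Odd n) (h3 : 3 ∣ (n + 1) / 2)
    (s v : List Bool) (hs : s ∈ SC1 n) (hv : v ∈ SC1 n)
    (hD : ∃ D : Multiset (ℕ × ℕ),
      AtMostErr 1 (compMS s) D ∧ AtMostErr 1 (compMS v) D) :
    ∀ i, 1 ≤ i → i ≤ (n + 1) / 2 → sigmaSeq s i = sigmaSeq v i := by
  obtain ⟨D, hDs, hDv⟩ := hD
  obtain ⟨hslen, -, -, hs3, -⟩ := hs
  obtain ⟨hvlen, -, -, hv3, -⟩ := hv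
  have hn : n % 2 = 1 := Nat.odd_iff.mp hodd
  have hn5 : 5 ≤ n := by
    rcases h3 with ⟨k, hk⟩; omega
  obtain ⟨a, ha⟩ := WM_err _ _ hDs
  obtain ⟨b, hb⟩ := WM_err _ _ hDv
  have Heq : ∀ l, l ≠ a → l ≠ b → cumW l s = cumW l v := by
    intro l h1 h2
    have := (ha l h1).symm.trans (hb l h2)
    rwa [WM_compMS, WM_compMS] at this
  have UC : ∀ l1 l2, 1 ≤ l1 → l1 ≤ (n + 1) / 2 → 1 ≤ l2 → l2 ≤ (n + 1) / 2 →
      cumW l1 s ≠ cumW l1 v → cumW l2 s ≠ cumW l2 v → l1 = l2 := by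
    intro l1 l2 h11 h12 h21 h22 hP1 hP2
    by_contra hne
    have m1 : l1 = a ∨ l1 = b := by
      by_contra h; push_neg at h; exact hP1 (Heq l1 h.1 h.2)
    have m2 : l2 = a ∨ l2 = b := by
      by_contra h; push_neg at h; exact hP2 (Heq l2 h.1 h.2)
    have m1' : n + 1 - l1 = a ∨ n + 1 - l1 = b := by
      by_contra h; push_neg at h
      have h' := Heq (n + 1 - l1) h.1 h.2
      have e1 := cumW_symm s n l1 hslen h11 (by omega)
      have e2 := cumW_symm v n l1 hvlen h11 (by omega)
      exact hP1 (by rw [e1, h', ← e2])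
    have m2' : n + 1 - l2 = a ∨ n + 1 - l2 = b := by
      by_contra h; push_neg at h
      have h' := Heq (n + 1 - l2) h.1 h.2
      have e1 := cumW_symm s n l2 hslen h21 (by omega)
      have e2 := cumW_symm v n l2 hvlen h21 (by omega)
      exact hP2 (by rw [e1, h', ← e2])
    rcases m1 with h1 | h1 <;> rcases m2 with h2 | h2 <;>
      rcases m1' with h1' | h1' <;> rcases m2' with h2' | h2' <;> omega
  have MC : ∀ l, 1 ≤ l → l ≤ (n + 1) / 2 → cumW l s = cumW l v := by
    intro c hc1 hc2
    by_contra hPc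
    have hz : ∀ i, 1 ≤ i → i ≤ (n + 1) / 2 → i ≠ c → cumW i s = cumW i v := by
      intro i h1 h2 hne
      by_contra hPi
      exact hne (UC i c h1 h2 hc1 hc2 hPi hPc)
    exact hPc (key_contra s v n c hslen hvlen hn hn5 hc1 hc2 hz hs3 hv3)
  have E : ∀ l, 1 ≤ l → cumW l s = cumW l v := by
    intro l hl
    by_cases h1 : l ≤ (n + 1) / 2
    · exact MC l hl h1
    · by_cases h2 : l ≤ n
      · rw [cumW_symm s n l hslen hl h2, cumW_symm v n l hvlen hl h2]
        exact MC (n + 1 - l) (by omega) (by omega)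
      · rw [cumW_gt s l (by omega), cumW_gt v l (by omega)]
  intro j hj1 hj2
  have is_ := sigma_identity s n j hslen hn (by omega) hj1 hj2
  have iv_ := sigma_identity v n j hvlen hn (by omega) hj1 hj2
  have e1 := E (n - j) (by omega)
  have e2 := E (n + 2 - j) (by omega)
  have e3 := E (n + 1 - j) (by omega)
  by_cases hk : 2 * j ≤ n
  · rw [if_pos hk] at is_ iv_; omega
  · rw [if_neg hk] at is_ iv_; omega
end

section
/- Let m be even and t ≥ 1. For any two distinct strings s, v ∈ S_R^(t)(m) with the same sequence (σ_1,…,σ_{m/2}), there is no multiset D that is simultaneously the result of at most t asymmetric composition errors in C(s) and the result of at most t asymmetric composition errors in C(v). In particular, given its correct sequence (σ_1,…,σ_{m/2}), any s ∈ S_R^(t)(m) is uniquely determined by a version of C(s) corrupted by at most t asymmetric composition errors. -/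
/-- The `t`-shifted reconstruction code `S_R^(t)(m)` for even `m`: `s_1 = ⋯ = s_t = 0`,
`s_{m−t+1} = ⋯ = s_m = 1`, and, letting `I = {i ∈ {t+1,…,m−t} : s_i ≠ s_{m+1−i}}`, the
subsequence of `s` indexed by the positions of `I` lying in `{1,…,m/2}` (in increasing
order) is a Catalan-Bertrand string (indices here are 0-based). -/
def SRt (t m : ℕ) : Set (List Bool) :=
  { s | s.length = m ∧
    (∀ i < t, s.getD i false = false) ∧
    (∀ i < t, s.getD (m - 1 - i) false = true) ∧
    IsCB (((List.range (m / 2)).filter fun i =>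
        decide (t ≤ i) && decide (i < m - t) &&
          (s.getD i false != s.getD (m - 1 - i) false)).map
      fun i => s.getD i false) }

section

open Multiset

theorem OneErr.card_sub_le {M M' : Multiset (ℕ × ℕ)} (h : OneErr M M') :
    card (M - M') ≤ 1 ∧ card (M' - M) ≤ 1 := by
  obtain ⟨z, w, z', w', -, -, rfl⟩ := h
  constructor
  · calc card (M - (M - {(z, w)} + {(z', w')})) ≤ card (M - (M - {(z, w)})) :=
          card_le_card (tsub_le_tsub_left (le_add_right (le_refl (M - {(z, w)}))) M)
      _ ≤ card ({(z, w)} : Multiset (ℕ × ℕ)) := card_le_card tsub_tsub_le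
      _ = 1 := card_singleton _
  · calc card (M - {(z, w)} + {(z', w')} - M) ≤ card ({(z', w')} : Multiset (ℕ × ℕ)) :=
          card_le_card (tsub_le_iff_left.mpr (add_le_add_left (Multiset.sub_le_self M _) _))
      _ = 1 := card_singleton _

theorem AtMostErr.card_sub_le {t : ℕ} {M D : Multiset (ℕ × ℕ)} (h : AtMostErr t M D) :
    card (M - D) ≤ t ∧ card (D - M) ≤ t := by
  induction t generalizing M with
  | zero => cases h; simp
  | succ t ih =>
    rcases h with rfl | ⟨M', hM', hD⟩
    · simp
    obtain ⟨h₁, h₂⟩ := hM'.card_sub_le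
    obtain ⟨h₃, h₄⟩ := ih hD
    constructor
    · calc card (M - D) ≤ card (M - M' + (M' - D)) := card_le_card tsub_le_tsub_add_tsub
        _ ≤ t + 1 := by rw [card_add]; omega
    · calc card (D - M) ≤ card (D - M' + (M' - M)) := card_le_card tsub_le_tsub_add_tsub
        _ ≤ t + 1 := by rw [card_add]; omega

theorem card_sub_le_of_atMostErr {t : ℕ} {M N D : Multiset (ℕ × ℕ)}
    (hM : AtMostErr t M D) (hN : AtMostErr t N D) : card (M - N) ≤ 2 * t := by
  have h₁ := hM.card_sub_le.1
  have h₂ := hN.card_sub_le.2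
  calc card (M - N) ≤ card (M - D + (D - N)) := card_le_card tsub_le_tsub_add_tsub
    _ ≤ 2 * t := by rw [card_add]; omega

theorem Multiset.two_le_card_sub_of_sum_map_eq {α : Type*} [DecidableEq α] {X Y : Multiset α}
    (f : α → ℕ) (hf : ∀ x ∈ X, ∀ y ∈ Y, f x = f y → x = y) (hcard : card X = card Y)
    (hsum : (X.map f).sum = (Y.map f).sum) (hne : X ≠ Y) : 2 ≤ card (X - Y) := by
  have hX : X ∩ Y + (X - Y) = X := by rw [add_comm, Multiset.sub_add_inter]
  have hY : X ∩ Y + (Y - X) = Y := by rw [inter_comm, add_comm, Multiset.sub_add_inter]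
  have hcard' : card (X - Y) = card (Y - X) := by
    have h₁ := congrArg card hX
    have h₂ := congrArg card hY
    rw [card_add] at h₁ h₂
    omega
  by_contra! hlt
  interval_cases h : card (X - Y)
  · exact hne (eq_of_le_of_card_le (tsub_eq_zero_iff_le.mp (card_eq_zero.mp h)) hcard.ge)
  · obtain ⟨x, hx⟩ := card_eq_one.mp h
    obtain ⟨y, hy⟩ := card_eq_one.mp hcard'.symm
    have hxy : x = y := by
      refine hf x (mem_of_le (Multiset.sub_le_self X Y) (by simp [hx])) y
        (mem_of_le (Multiset.sub_le_self Y X) (by simp [hy])) ?_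
      have e₁ := congrArg (fun Z => (Z.map f).sum) hX
      have e₂ := congrArg (fun Z => (Z.map f).sum) hY
      simp only [map_add, sum_add, hx, hy, map_singleton, sum_singleton] at e₁ e₂
      omega
    apply hne
    calc X = X ∩ Y + (X - Y) := hX.symm
      _ = X ∩ Y + (Y - X) := by rw [hx, hy, hxy]
      _ = Y := hY

theorem Finset.map_val_ne_of_filter_ssubset {α β : Type*} (S : Finset α) {f g : α → β}
    (p : β → Prop) [DecidablePred p] (h : S.filter (p ∘ g) ⊂ S.filter (p ∘ f)) :
    S.val.map f ≠ S.val.map g := by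
  intro hfg
  have := congrArg (Multiset.countP p) hfg
  rw [Multiset.countP_map, Multiset.countP_map] at this
  exact (Finset.card_lt_card h).ne' this

theorem compLen_eq_map_range (l : ℕ) (u : List Bool) :
    compLen l u = (Finset.range (u.length + 1 - l)).val.map fun a => comp ((u.drop a).take l) :=
  rfl

theorem comp_fst_add_snd (w : List Bool) : (comp w).1 + (comp w).2 = w.length :=
  List.count_false_add_count_true w

theorem lenPart_compMS {l : ℕ} (u : List Bool) (hl : 1 ≤ l) (hlu : l ≤ u.length) :
    lenPart l (compMS u) = compLen l u := by
  set n := u.length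
  have block : ∀ i ∈ List.range n,
      ((List.range (n - i)).map fun j => comp ((u.drop i).take (j + 1))).filter
          (fun q => decide (q.1 + q.2 = l)) =
        if i < n + 1 - l then [comp ((u.drop i).take l)] else [] := by
    intro i hi
    rw [List.mem_range] at hi
    have hfilter : (List.range (n - i)).filter
        ((fun q : ℕ × ℕ => decide (q.1 + q.2 = l)) ∘ fun j => comp ((u.drop i).take (j + 1))) =
          (List.range (n - i)).filter fun j => decide (j = l - 1) := by
      refine List.filter_congr fun j hj => ?_
      rw [List.mem_range] at hj
      simp only [Function.comp_apply, comp_fst_add_snd, List.length_take, List.length_drop]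
      exact decide_eq_decide.mpr (by omega)
    rw [List.filter_map, hfilter, List.filter_eq, List.count_range]
    by_cases h : i < n + 1 - l
    · rw [if_pos (by omega), if_pos h]
      simp [Nat.sub_add_cancel hl]
    · rw [if_neg (by omega), if_neg h]
      rfl
  rw [lenPart, compMS, Multiset.filter_coe, List.filter_flatMap, List.flatMap_congr block,
    compLen]
  congr 1
  obtain ⟨k, hk⟩ : ∃ k, n = (n + 1 - l) + k := ⟨l - 1, by omega⟩
  rw [hk, List.range_add, List.flatMap_append, ← hk]
  have hlow : (List.range (n + 1 - l)).flatMap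
      (fun i => if i < n + 1 - l then [comp ((u.drop i).take l)] else []) =
        (List.range (n + 1 - l)).map fun i => comp ((u.drop i).take l) := by
    rw [← List.flatMap_pure_eq_map]
    exact List.flatMap_congr fun i hi => if_pos (List.mem_range.mp hi)
  have hhigh : ((List.range k).map (n + 1 - l + ·)).flatMap
      (fun i => if i < n + 1 - l then [comp ((u.drop i).take l)] else []) = [] :=
    List.flatMap_eq_nil_iff.mpr fun i hi => if_neg (by simp at hi; omega)
  rw [hlow, hhigh, List.append_nil]

theorem sum_card_lenPart_le (L : Finset ℕ) (M : Multiset (ℕ × ℕ)) :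
    ∑ l ∈ L, card (lenPart l M) ≤ card M := by
  set N := M.map fun q => q.1 + q.2
  have hcount : ∀ l, card (lenPart l M) = N.count l := fun l => by
    rw [count_map, lenPart]
    congr 1
    exact filter_congr fun q _ => eq_comm
  calc ∑ l ∈ L, card (lenPart l M) = ∑ l ∈ L, N.count l := Finset.sum_congr rfl fun l _ => hcount l
    _ ≤ ∑ l ∈ L ∪ N.toFinset, N.count l := Finset.sum_le_sum_of_subset Finset.subset_union_left
    _ = card N := sum_count_eq_card fun l hl => by simp [hl]
    _ = card M := card_map _ _

theorem two_mul_card_le_card_compMS_sub {s v : List Bool} (hlen : s.length = v.length)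
    (hsum : ∀ l, ((compLen l s).map Prod.snd).sum = ((compLen l v).map Prod.snd).sum)
    (L : Finset ℕ) (hL : ∀ l ∈ L, 1 ≤ l ∧ l ≤ s.length ∧ compLen l s ≠ compLen l v) :
    2 * L.card ≤ card (compMS s - compMS v) := by
  calc 2 * L.card = ∑ _ ∈ L, 2 := by rw [Finset.sum_const, smul_eq_mul, mul_comm]
    _ ≤ ∑ l ∈ L, card (lenPart l (compMS s - compMS v)) := by
      refine Finset.sum_le_sum fun l hl => ?_
      obtain ⟨hl1, hls, hne⟩ := hL l hl
      rw [lenPart, filter_sub, ← lenPart, ← lenPart, lenPart_compMS s hl1 hls,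
        lenPart_compMS v hl1 (hlen ▸ hls)]
      refine two_le_card_sub_of_sum_map_eq Prod.snd (fun x hx y hy hxy => ?_)
        (by simp [compLen, hlen]) (hsum l) hne
      rw [← lenPart_compMS s hl1 hls, lenPart, mem_filter] at hx
      rw [← lenPart_compMS v hl1 (hlen ▸ hls), lenPart, mem_filter] at hy
      exact Prod.ext (by omega) hxy
    _ ≤ card (compMS s - compMS v) := sum_card_lenPart_le L _

end

def prefixOnes (u : List Bool) (a : ℕ) : ℕ := (u.take a).count true

section prefixOnes

variable {u : List Bool} {t m a b : ℕ}

@[simp] theorem prefixOnes_zero (u : List Bool) : prefixOnes u 0 = 0 := by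
  simp [prefixOnes]

theorem prefixOnes_add (u : List Bool) (a c : ℕ) :
    prefixOnes u (a + c) = prefixOnes u a + ((u.drop a).take c).count true := by
  rw [prefixOnes, List.take_add, List.count_append, prefixOnes]

theorem prefixOnes_succ (u : List Bool) (a : ℕ) :
    prefixOnes u (a + 1) = prefixOnes u a + (u.getD a false).toNat := by
  rw [prefixOnes_add, List.take_one, List.head?_drop, List.getD_eq_getElem?_getD]
  cases u[a]? with
  | none => rfl
  | some x => cases x <;> rfl

theorem prefixOnes_mono (u : List Bool) (h : a ≤ b) : prefixOnes u a ≤ prefixOnes u b := by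
  obtain ⟨c, rfl⟩ := Nat.exists_eq_add_of_le h
  rw [prefixOnes_add]
  exact Nat.le_add_right _ _

theorem prefixOnes_le_add (u : List Bool) (h : a ≤ b) :
    prefixOnes u b ≤ prefixOnes u a + (b - a) := by
  obtain ⟨c, rfl⟩ := Nat.exists_eq_add_of_le h
  rw [prefixOnes_add, Nat.add_sub_cancel_left]
  exact Nat.add_le_add_left (List.count_le_length.trans (List.length_take_le _ _)) _

theorem prefixOnes_of_length_le (h : u.length ≤ a) : prefixOnes u a = prefixOnes u u.length := by
  rw [prefixOnes, prefixOnes, List.take_of_length_le h, List.take_length]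

theorem prefixOnes_eq_zero (h0 : ∀ i < t, u.getD i false = false) (ha : a ≤ t) :
    prefixOnes u a = 0 := by
  induction a with
  | zero => rfl
  | succ a ih => rw [prefixOnes_succ, ih (by omega), h0 a (by omega)]; rfl

theorem prefixOnes_sub_add (h1 : ∀ i < t, u.getD (m - 1 - i) false = true) {c : ℕ}
    (hct : c ≤ t) (hcm : c ≤ m) : prefixOnes u (m - c) + c = prefixOnes u m := by
  induction c with
  | zero => rfl
  | succ c ih =>
    have h := prefixOnes_succ u (m - 1 - c)
    rw [h1 c (by omega), show m - 1 - c + 1 = m - c by omega] at h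
    rw [← ih (by omega) (by omega), h, show m - 1 - c = m - (c + 1) by omega]
    simp only [Bool.toNat_true]
    omega

theorem exists_prefixOnes_ne {s v : List Bool} (hlen : s.length = v.length) (hne : s ≠ v) :
    ∃ a, prefixOnes s a ≠ prefixOnes v a := by
  by_contra! h
  refine hne (List.ext_getElem hlen fun i hs hv => ?_)
  have := prefixOnes_succ s i
  rw [h, h, prefixOnes_succ, List.getD_eq_getElem _ _ hs, List.getD_eq_getElem _ _ hv] at this
  revert this
  cases s[i] <;> cases v[i] <;> simp

end prefixOnes

theorem prefixOnes_add_prefixOnes_eq_sum_sigmaSeq_add {u : List Bool} {m a : ℕ}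
    (hlen : u.length = m) (ha : 2 * a ≤ m) :
    prefixOnes u a + prefixOnes u m =
      ∑ i ∈ Finset.range a, sigmaSeq u (i + 1) + prefixOnes u (m - a) := by
  induction a with
  | zero => simp
  | succ a ih =>
    have hlast := prefixOnes_succ u (m - (a + 1))
    rw [show m - (a + 1) + 1 = m - a by omega] at hlast
    have hσ : sigmaSeq u (a + 1) = (u.getD a false).toNat + (u.getD (m - (a + 1)) false).toNat := by
      rw [sigmaSeq, if_pos (by omega), hlen, Nat.add_sub_cancel]
      cases u.getD a false <;> cases u.getD (m - (a + 1)) false <;> rfl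
    rw [Finset.sum_range_succ, prefixOnes_succ, hσ]
    have := ih (by omega)
    omega

/-- `prefixOnes s - prefixOnes v` is symmetric about `m / 2`, stated without subtraction. -/
theorem prefixOnes_add_prefixOnes_sub_eq {m : ℕ} {s v : List Bool} (hm : Even m)
    (hls : s.length = m) (hlv : v.length = m)
    (hσ : ∀ i, 1 ≤ i → i ≤ m / 2 → sigmaSeq s i = sigmaSeq v i) (a : ℕ) :
    prefixOnes s a + prefixOnes v (m - a) = prefixOnes v a + prefixOnes s (m - a) := by
  have hhalf : m - m / 2 = m / 2 := by obtain ⟨k, rfl⟩ := hm; omega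
  have key : ∀ a, 2 * a ≤ m →
      prefixOnes s a + prefixOnes v (m - a) = prefixOnes v a + prefixOnes s (m - a) := by
    intro a ha
    have hsum : ∀ b, 2 * b ≤ m → ∑ i ∈ Finset.range b, sigmaSeq s (i + 1) =
        ∑ i ∈ Finset.range b, sigmaSeq v (i + 1) := fun b hb =>
      Finset.sum_congr rfl fun i hi => hσ (i + 1) (by omega) (by simp at hi; omega)
    have hs := prefixOnes_add_prefixOnes_eq_sum_sigmaSeq_add hls ha
    have hv := prefixOnes_add_prefixOnes_eq_sum_sigmaSeq_add hlv ha
    have hs' := prefixOnes_add_prefixOnes_eq_sum_sigmaSeq_add hls (a := m / 2) (by omega)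
    have hv' := prefixOnes_add_prefixOnes_eq_sum_sigmaSeq_add hlv (a := m / 2) (by omega)
    rw [hhalf] at hs' hv'
    have := hsum a ha
    have := hsum (m / 2) (by omega)
    omega
  rcases le_or_gt (2 * a) m with ha | ha
  · exact key a ha
  rcases le_or_gt a m with ha' | ha'
  · have := key (m - a) (by omega)
    rw [Nat.sub_sub_self ha'] at this
    omega
  · have := key 0 (by omega)
    rw [Nat.sub_eq_zero_of_le ha'.le, prefixOnes_of_length_le (a := a) (by omega),
      prefixOnes_of_length_le (u := v) (a := a) (by omega), hls, hlv]
    simpa [add_comm] using this.symm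

theorem sum_snd_compLen_add_sum_prefixOnes {m : ℕ} {u : List Bool} (hlen : u.length = m) (l : ℕ) :
    ((compLen l u).map Prod.snd).sum + ∑ a ∈ Finset.range (m + 1 - l), prefixOnes u a =
      ∑ a ∈ Finset.range (m + 1 - l), prefixOnes u (m - a) := by
  rw [compLen_eq_map_range, hlen, Multiset.map_map, Finset.sum_map_val, ← Finset.sum_add_distrib,
    ← Finset.sum_range_reflect]
  refine Finset.sum_congr rfl fun a ha => ?_
  rw [Finset.mem_range] at ha
  rw [show m - a = m + 1 - l - 1 - a + l by omega, prefixOnes_add, add_comm]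
  rfl

theorem sum_snd_compLen_eq {m : ℕ} {s v : List Bool} (hls : s.length = m) (hlv : v.length = m)
    (hsymm : ∀ a, prefixOnes s a + prefixOnes v (m - a) = prefixOnes v a + prefixOnes s (m - a))
    (l : ℕ) : ((compLen l s).map Prod.snd).sum = ((compLen l v).map Prod.snd).sum := by
  have hs := sum_snd_compLen_add_sum_prefixOnes hls l
  have hv := sum_snd_compLen_add_sum_prefixOnes hlv l
  have h := Finset.sum_congr rfl fun a (_ : a ∈ Finset.range (m + 1 - l)) => hsymm a
  rw [Finset.sum_add_distrib, Finset.sum_add_distrib] at h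
  omega

theorem IsCB.count_true_le {w w' : List Bool} (h : IsCB w) (hw' : w' <+: w) :
    w'.count true ≤ w'.count false := by
  rcases Nat.eq_zero_or_pos w'.length with h0 | hpos
  · simp [List.length_eq_zero_iff.mp h0]
  · rw [List.prefix_iff_eq_take.mp hw']
    exact (h _ hpos (hw'.length_le)).le

/-- For `q = m / 2` this is the word required to be Catalan-Bertrand in `SRt t m`. -/
def mismatchWord (t m : ℕ) (u : List Bool) (q : ℕ) : List Bool :=
  ((List.range q).filter fun i =>
      decide (t ≤ i) && decide (i < m - t) && (u.getD i false != u.getD (m - 1 - i) false)).map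
    fun i => u.getD i false

section SRt

variable {t m q : ℕ} {u : List Bool}

theorem mismatchWord_succ : mismatchWord t m u (q + 1) = mismatchWord t m u q ++
    if decide (t ≤ q) && decide (q < m - t) && (u.getD q false != u.getD (m - 1 - q) false)
    then [u.getD q false] else [] := by
  simp only [mismatchWord, List.range_succ, List.filter_append, List.map_append, List.filter_cons,
    List.filter_nil]
  split <;> rfl

theorem mismatchWord_prefix {n : ℕ} (h : q ≤ n) :
    mismatchWord t m u q <+: mismatchWord t m u n := by
  obtain ⟨k, rfl⟩ := Nat.exists_eq_add_of_le h
  simp only [mismatchWord, List.range_add]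
  exact ((List.prefix_append _ _).filter _).map _

/-- Pairing position `i` with `m - 1 - i`: each of the first `t` pairs is `(0, 1)`, each mismatched
pair after them is `(0, 1)` or `(1, 0)`, and every other pair is balanced. -/
theorem prefixOnes_add_count_mismatchWord (hu : u ∈ SRt t m) (hq : 2 * q ≤ m) :
    prefixOnes u m + (mismatchWord t m u q).count true =
      prefixOnes u (m - q) + prefixOnes u q + min q t + (mismatchWord t m u q).count false := by
  induction q with
  | zero => simp [mismatchWord]
  | succ q ih =>
    have ih := ih (by omega)
    have hlast := prefixOnes_succ u (m - 1 - q)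
    rw [show m - 1 - q + 1 = m - q by omega] at hlast
    rw [mismatchWord_succ, List.count_append, List.count_append, prefixOnes_succ,
      show m - (q + 1) = m - 1 - q by omega]
    by_cases hqt : q < t
    · have h₀ := hu.2.1 q hqt
      have h₁ := hu.2.2.1 q hqt
      rw [h₁, Bool.toNat_true] at hlast
      rw [h₀, h₁, if_neg (by simp; omega), List.count_nil, List.count_nil, Bool.toNat_false]
      omega
    · simp only [show decide (t ≤ q) = true by simpa using hqt,
        show decide (q < m - t) = true by simp; omega, Bool.true_and]
      have hmin : min (q + 1) t = min q t := by omega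
      revert hlast
      cases u.getD q false <;> cases u.getD (m - 1 - q) false <;> simp <;> omega

theorem prefixOnes_add_prefixOnes_add_le (hu : u ∈ SRt t m) (htq : t ≤ q) (hq : 2 * q ≤ m) :
    prefixOnes u (m - q) + prefixOnes u q + t ≤ prefixOnes u m := by
  have hpair := prefixOnes_add_count_mismatchWord hu hq
  have hcb : IsCB (mismatchWord t m u (m / 2)) := hu.2.2.2
  have := hcb.count_true_le (mismatchWord_prefix (q := q) (by omega))
  rw [min_eq_right htq] at hpair
  omega

/-- Count the length-`l` windows at least as heavy as the window of `s` at `r`. Windows starting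
before `m - r - l` are lighter than that in `v` (by the code inequality), those starting between
`m - r - l` and `r` agree in `s` and `v` (by the symmetry), and those starting from `r` on end in
the final run of `1`s, so all of them are heavy in `s`, whereas the one of `v` at `r` is not. -/
theorem compLen_ne_of_prefixOnes_lt {s v : List Bool} {r l : ℕ} (hs : s ∈ SRt t m)
    (hv : v ∈ SRt t m)
    (hsymm : ∀ a, prefixOnes s a + prefixOnes v (m - a) = prefixOnes v a + prefixOnes s (m - a))
    (hbefore : ∀ a < r, prefixOnes s a = prefixOnes v a) (hr : prefixOnes v r = prefixOnes s r + 1)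
    (htr : t ≤ r) (hrm : 2 * r ≤ m) (hrl : r + l ≤ m) (hlt : m ≤ r + l + t) :
    compLen l s ≠ compLen l v := by
  set w : List Bool → ℕ → ℕ := fun u a => ((u.drop a).take l).count true
  have hw : ∀ u a, prefixOnes u (a + l) = prefixOnes u a + w u a := fun u a => prefixOnes_add u a l
  have hsuf : ∀ u ∈ SRt t m, ∀ a, r ≤ a → a + l ≤ m →
      prefixOnes u (a + l) + (m - (a + l)) = prefixOnes u m := fun u hu a h₁ h₂ => by
    simpa [Nat.sub_sub_self h₂] using
      prefixOnes_sub_add hu.2.2.1 (c := m - (a + l)) (by omega) (by omega)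
  have hW : prefixOnes s m = prefixOnes v m := by simpa using (hsymm 0).symm
  have hwr : w v r + 1 = w s r := by
    have := hw s r; have := hw v r; have := hsuf s hs r le_rfl hrl; have := hsuf v hv r le_rfl hrl
    omega
  have hleft : ∀ a, a + l ≤ m - r → w v a < w s r := fun a ha => by
    have := prefixOnes_mono v ha
    have := prefixOnes_add_prefixOnes_add_le hv htr hrm
    have := hw v a; have := hw s r; have := hsuf s hs r le_rfl hrl
    omega
  have hmid : ∀ a, m - r < a + l → a < r → w s a = w v a := fun a h₁ h₂ => by
    have := hbefore a h₂; have := hbefore (m - (a + l)) (by omega); have := hsymm (a + l)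
    have := hw s a; have := hw v a
    omega
  have hright : ∀ a, r ≤ a → a + l ≤ m → w s r ≤ w s a := fun a h₁ h₂ => by
    have := hsuf s hs a h₁ h₂; have := hsuf s hs r le_rfl hrl; have := prefixOnes_le_add s h₁
    have := hw s a; have := hw s r
    omega
  rw [compLen_eq_map_range, compLen_eq_map_range, hs.1, hv.1]
  refine Finset.map_val_ne_of_filter_ssubset _ (fun q => w s r ≤ q.2) ?_
  refine (Finset.ssubset_iff_of_subset fun a ha => ?_).mpr ⟨r, ?_, ?_⟩
  · simp only [Finset.mem_filter, Finset.mem_range] at ha ⊢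
    obtain ⟨ha, hva⟩ := ha
    change w s r ≤ w v a at hva
    refine ⟨ha, show w s r ≤ w s a from ?_⟩
    rcases le_or_gt (a + l) (m - r) with h | h
    · exact absurd hva (not_le.mpr (hleft a h))
    rcases lt_or_ge a r with h' | h'
    · exact hmid a h h' ▸ hva
    · exact hright a h' (by omega)
  · simp only [Finset.mem_filter, Finset.mem_range]
    exact ⟨by omega, le_refl (w s r)⟩
  · simp only [Finset.mem_filter, not_and]
    exact fun _ => show ¬ w s r ≤ w v r by omega

theorem exists_first_prefixOnes_ne {s v : List Bool} (hs : s ∈ SRt t m) (hv : v ∈ SRt t m)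
    (hne : s ≠ v)
    (hsymm : ∀ a, prefixOnes s a + prefixOnes v (m - a) = prefixOnes v a + prefixOnes s (m - a)) :
    ∃ r, t < r ∧ 2 * r ≤ m ∧ (∀ a < r, prefixOnes s a = prefixOnes v a) ∧
      (prefixOnes v r = prefixOnes s r + 1 ∨ prefixOnes s r = prefixOnes v r + 1) := by
  classical
  have hex := exists_prefixOnes_ne (hs.1.trans hv.1.symm) hne
  obtain ⟨r, hr, hmin⟩ : ∃ r, prefixOnes s r ≠ prefixOnes v r ∧
      ∀ a < r, prefixOnes s a = prefixOnes v a :=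
    ⟨Nat.find hex, Nat.find_spec hex, fun a ha => not_not.mp (Nat.find_min hex ha)⟩
  have htr : t < r := by
    by_contra! h
    exact hr (by rw [prefixOnes_eq_zero hs.2.1 h, prefixOnes_eq_zero hv.2.1 h])
  refine ⟨r, htr, ?_, hmin, ?_⟩
  · by_contra! h
    have := hsymm r
    have := hmin (m - r) (by omega)
    omega
  · obtain ⟨p, rfl⟩ := Nat.exists_eq_add_one_of_ne_zero (by omega : r ≠ 0)
    have := hmin p (by omega)
    rw [prefixOnes_succ, prefixOnes_succ] at hr ⊢
    have := Bool.toNat_le (s.getD p false)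
    have := Bool.toNat_le (v.getD p false)
    omega

end SRt

theorem SRt_corrects_asymmetric_errors_general (m t : ℕ) (hm : Even m)
    (s v : List Bool) (hs : s ∈ SRt t m) (hv : v ∈ SRt t m) (hne : s ≠ v)
    (hσ : ∀ i, 1 ≤ i → i ≤ m / 2 → sigmaSeq s i = sigmaSeq v i) :
    ¬ ∃ D : Multiset (ℕ × ℕ), AsymErr t m s D ∧ AsymErr t m v D := by
  rintro ⟨D, ⟨hsD, -⟩, ⟨hvD, -⟩⟩
  have hsymm := prefixOnes_add_prefixOnes_sub_eq hm hs.1 hv.1 hσ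
  obtain ⟨r, htr, hrm, hbefore, hr⟩ := exists_first_prefixOnes_ne hs hv hne hsymm
  have hdiff : ∀ l ∈ Finset.Icc (m - r - t) (m - r),
      1 ≤ l ∧ l ≤ s.length ∧ compLen l s ≠ compLen l v := by
    intro l hl
    rw [Finset.mem_Icc] at hl
    refine ⟨by omega, by rw [hs.1]; omega, ?_⟩
    rcases hr with hr | hr
    · exact compLen_ne_of_prefixOnes_lt hs hv hsymm hbefore hr htr.le hrm (by omega) (by omega)
    · exact (compLen_ne_of_prefixOnes_lt hv hs (fun a => (hsymm a).symm)
        (fun a ha => (hbefore a ha).symm) hr htr.le hrm (by omega) (by omega)).symm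
  have hlow := two_mul_card_le_card_compMS_sub (hs.1.trans hv.1.symm)
    (sum_snd_compLen_eq hs.1 hv.1 hsymm) _ hdiff
  have hup := card_sub_le_of_atMostErr hsD hvD
  rw [Nat.card_Icc] at hlow
  omega

/-- Let `m` be even and `t ≥ 1`. For distinct `s, v ∈ S_R^(t)(m)` with
the same sequence `(σ_1,…,σ_{m/2})`, no multiset `D` is simultaneously the result of at
most `t` asymmetric composition errors in `C(s)` and in `C(v)`. -/
theorem SRt_corrects_asymmetric_errors (m t : ℕ) (hm : Even m) (ht : 1 ≤ t)
    (s v : List Bool) (hs : s ∈ SRt t m) (hv : v ∈ SRt t m) (hne : s ≠ v)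
    (hσ : ∀ i, 1 ≤ i → i ≤ m / 2 → sigmaSeq s i = sigmaSeq v i) :
    ¬ ∃ D : Multiset (ℕ × ℕ), AsymErr t m s D ∧ AsymErr t m v D :=
  SRt_corrects_asymmetric_errors_general m t hm s v hs hv hne hσ
end
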